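/- arXiv:2108.03154 — 6 statements merged into one kernel-verified Lean document; each statement's English description precedes it below -/
import Mathlib

section
/- Let f be a normalized, monotone, submodular set function on a finite ground set Ω, and let A, B ⊆ Ω be disjoint. If f(A ∪ B) = f(A) + f(B) (Joint Independence), then f(B ∪ {a}) − f(B) = f({a}) for every a ∈ A, and f(A ∪ {b}) − f(A) = f({b}) for every b ∈ B (Marginal Independence). -/
lemma JI_MI_aux {Ω : Type*} [Fintype Ω] [DecidableEq Ω]
    (f : Finset Ω → ℝ)
    (hnorm : f ∅ = 0)
    (hsub : ∀ S T : Finset Ω, f S + f T ≥ f (S ∪ T) + f (S ∩ T))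
    (A B : Finset Ω) (hdisj : Disjoint A B)
    (hJI : f (A ∪ B) = f A + f B) :
    ∀ a ∈ A, f (B ∪ {a}) - f B = f {a} := by
  intro a ha
  have haB : a ∉ B := fun hb => (Finset.disjoint_left.mp hdisj ha) hb
  have h1 := hsub {a} B
  have e1 : ({a} : Finset Ω) ∪ B = B ∪ {a} := Finset.union_comm _ _
  have e2 : ({a} : Finset Ω) ∩ B = ∅ := by
    ext x; simp; rintro rfl; exact haB
  rw [e1, e2, hnorm] at h1
  have h2 := hsub (B ∪ {a}) A
  have e3 : (B ∪ {a}) ∪ A = A ∪ B := by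
    ext x; simp only [Finset.mem_union, Finset.mem_singleton]
    constructor
    · rintro ((h | rfl) | h) <;> tauto
    · tauto
  have e4 : (B ∪ {a}) ∩ A = {a} := by
    ext x
    simp only [Finset.mem_inter, Finset.mem_union, Finset.mem_singleton]
    constructor
    · rintro ⟨h | rfl, hA⟩
      · exact absurd h (Finset.disjoint_left.mp hdisj hA)
      · rfl
    · rintro rfl; exact ⟨Or.inr rfl, ha⟩
  rw [e3, e4, hJI] at h2
  linarith

/-- JI implies MI: if `f` is normalized, monotone, submodular and the disjoint
sets `A`, `B` are jointly independent, then they are marginally independent. -/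
theorem JI_implies_MI {Ω : Type*} [Fintype Ω] [DecidableEq Ω]
    (f : Finset Ω → ℝ)
    (hnorm : f ∅ = 0)
    (hmono : ∀ S T : Finset Ω, S ⊆ T → f S ≤ f T)
    (hsub : ∀ S T : Finset Ω, f S + f T ≥ f (S ∪ T) + f (S ∩ T))
    (A B : Finset Ω) (hdisj : Disjoint A B)
    (hJI : f (A ∪ B) = f A + f B) :
    (∀ a ∈ A, f (B ∪ {a}) - f B = f {a}) ∧
    (∀ b ∈ B, f (A ∪ {b}) - f A = f {b}) := by
  refine ⟨JI_MI_aux f hnorm hsub A B hdisj hJI, ?_⟩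
  exact JI_MI_aux f hnorm hsub B A hdisj.symm
    (by rw [Finset.union_comm, hJI]; ring)
end

section
/- For every integer k ≥ 3, the matroid rank function f(S) = min(|S|, k) on a finite ground set Ω containing two disjoint sets A and B each of size k − 1 is normalized, monotone, and submodular, and A and B are Subset-Modular-Independent (f(X ∪ {j}) − f(X) = f({j}) for every j ∈ (A ∪ B) \ X whenever X ⊆ A or X ⊆ B), but they are not Modular-Independent: there exist X ⊆ A ∪ B and j ∈ (A ∪ B) \ X with f(X ∪ {j}) − f(X) ≠ f({j}). -/
/-- For every `k ≥ 3`, the uniform matroid rank function `f S = min |S| k` is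
normalized, monotone and submodular, and any two disjoint sets `A`, `B` of size
`k - 1` are subset-modular-independent but not modular-independent. -/
theorem SModI_not_implies_ModI (k : ℕ) (hk : 3 ≤ k)
    (Ω : Type*) [Fintype Ω] [DecidableEq Ω]
    (A B : Finset Ω) (hdisj : Disjoint A B)
    (hA : A.card = k - 1) (hB : B.card = k - 1)
    (f : Finset Ω → ℝ) (hf : ∀ S : Finset Ω, f S = (min S.card k : ℕ)) :
    f ∅ = 0 ∧
    (∀ S T : Finset Ω, S ⊆ T → f S ≤ f T) ∧
    (∀ S T : Finset Ω, f S + f T ≥ f (S ∪ T) + f (S ∩ T)) ∧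
    (∀ X : Finset Ω, (X ⊆ A ∨ X ⊆ B) →
      ∀ j ∈ (A ∪ B) \ X, f (X ∪ {j}) - f X = f {j}) ∧
    (∃ X ⊆ A ∪ B, ∃ j ∈ (A ∪ B) \ X, f (X ∪ {j}) - f X ≠ f {j}) := by
  refine ⟨by simp [hf], ?_, ?_, ?_, ?_⟩
  · intro S T hST
    rw [hf, hf]
    exact_mod_cast Nat.cast_le.mpr (min_le_min (Finset.card_le_card hST) le_rfl)
  · intro S T
    rw [hf, hf, hf, hf]
    have h1 := Finset.card_union_add_card_inter S T
    have h2 : S.card ≤ (S ∪ T).card := Finset.card_le_card Finset.subset_union_left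
    have h3 : T.card ≤ (S ∪ T).card := Finset.card_le_card Finset.subset_union_right
    have : min (S ∪ T).card k + min (S ∩ T).card k ≤ min S.card k + min T.card k := by
      omega
    exact_mod_cast Nat.cast_le.mpr this
  · intro X hX j hj
    rw [Finset.mem_sdiff] at hj
    have hjX : j ∉ X := hj.2
    have hcard : X.card ≤ k - 1 := by
      rcases hX with h | h
      · exact hA ▸ Finset.card_le_card h
      · exact hB ▸ Finset.card_le_card h
    have hc1 : (X ∪ {j}).card = X.card + 1 := by
      rw [show X ∪ {j} = insert j X by ext x; simp [or_comm], Finset.card_insert_of_notMem hjX]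
    rw [hf, hf, hf, hc1, Finset.card_singleton]
    have e1 : min (X.card + 1) k = X.card + 1 := by omega
    have e2 : min X.card k = X.card := by omega
    have e3 : min 1 k = 1 := by omega
    rw [e1, e2, e3]
    push_cast
    ring
  · obtain ⟨j, hjB⟩ : B.Nonempty := Finset.card_pos.mp (by omega)
    refine ⟨A ∪ B.erase j, Finset.union_subset_union_right (Finset.erase_subset j B), j, ?_, ?_⟩
    · rw [Finset.mem_sdiff, Finset.mem_union, Finset.mem_union]
      exact ⟨Or.inr hjB, fun h => by
        rcases h with h | h
        · exact (Finset.disjoint_right.mp hdisj hjB) h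
        · exact (Finset.notMem_erase j B) h⟩
    · have hjA : j ∉ A := Finset.disjoint_right.mp hdisj hjB
      have hXj : (A ∪ B.erase j) ∪ {j} = A ∪ B := by
        ext x
        by_cases hx : x = j <;> simp [hx, Finset.mem_erase, hjB]
      have hd : Disjoint A (B.erase j) := hdisj.mono_right (Finset.erase_subset j B)
      have hcX : (A ∪ B.erase j).card = (k - 1) + (k - 2) := by
        rw [Finset.card_union_of_disjoint hd, hA, Finset.card_erase_of_mem hjB, hB]; omega
      have hcU : (A ∪ B).card = (k - 1) + (k - 1) := by
        rw [Finset.card_union_of_disjoint hdisj, hA, hB]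
      rw [hf, hf, hf, hXj, hcX, hcU, Finset.card_singleton]
      have e1 : min ((k - 1) + (k - 1)) k = k := by omega
      have e2 : min ((k - 1) + (k - 2)) k = k := by omega
      have e3 : min 1 k = 1 := by omega
      rw [e1, e2, e3]
      simp
end

section
/- For every integer k ≥ 3, the function f(S) = min(|S|, k) on a ground set Ω containing two disjoint sets A and B each of size k − 1 witnesses that Subset-Modular Independence does not imply Joint Independence: A and B are Subset-Modular-Independent (f(X ∪ {j}) − f(X) = f({j}) for every j ∈ (A ∪ B) \ X whenever X ⊆ A or X ⊆ B), but f(A ∪ B) = k ≠ 2(k − 1) = f(A) + f(B). -/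
/-- For every `k ≥ 3`, with `f S = min |S| k` and disjoint sets `A`, `B` each of
size `k - 1`, subset-modular independence holds but joint independence fails:
`f (A ∪ B) = k ≠ 2 * (k - 1) = f A + f B`. -/
theorem SModI_not_implies_JI (k : ℕ) (hk : 3 ≤ k)
    (Ω : Type*) [Fintype Ω] [DecidableEq Ω]
    (A B : Finset Ω) (hdisj : Disjoint A B)
    (hA : A.card = k - 1) (hB : B.card = k - 1)
    (f : Finset Ω → ℝ) (hf : ∀ S : Finset Ω, f S = (min S.card k : ℕ)) :
    (∀ X : Finset Ω, (X ⊆ A ∨ X ⊆ B) →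
      ∀ j ∈ (A ∪ B) \ X, f (X ∪ {j}) - f X = f {j}) ∧
    f (A ∪ B) = (k : ℝ) ∧
    f A + f B = 2 * ((k : ℝ) - 1) ∧
    f (A ∪ B) ≠ f A + f B := by
  have hAB : (A ∪ B).card = 2 * (k - 1) := by
    rw [Finset.card_union_of_disjoint hdisj, hA, hB]; ring
  have hfAB : f (A ∪ B) = (k : ℝ) := by
    rw [hf, hAB, min_eq_right (by omega)]
  refine ⟨?_, hfAB, ?_, ?_⟩
  · intro X hX j hj
    rw [Finset.mem_sdiff] at hj
    have hXcard : X.card ≤ k - 1 := by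
      rcases hX with h | h
      · exact hA ▸ Finset.card_le_card h
      · exact hB ▸ Finset.card_le_card h
    have hjX : j ∉ X := hj.2
    have hcard : (X ∪ {j}).card = X.card + 1 := by
      have he : X ∪ {j} = insert j X := by ext x; simp [or_comm]
      rw [he, Finset.card_insert_of_notMem hjX]
    rw [hf, hf, hf, hcard, Finset.card_singleton,
      min_eq_left (by omega), min_eq_left (by omega), min_eq_left (by omega)]
    push_cast; ring
  · rw [hf, hf, hA, hB, min_eq_left (by omega)]
    have : ((k - 1 : ℕ) : ℝ) = (k : ℝ) - 1 := by
      have : (1 : ℕ) ≤ k := by omega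
      push_cast [this]; ring
    rw [this]; ring
  · rw [hfAB, hf, hf, hA, hB, min_eq_left (by omega)]
    have h1 : ((k - 1 : ℕ) : ℝ) = (k : ℝ) - 1 := by
      have : (1 : ℕ) ≤ k := by omega
      push_cast [this]; ring
    rw [h1]
    have hk3 : (3 : ℝ) ≤ (k : ℝ) := by exact_mod_cast hk
    intro h; linarith
end

section
/- There exist a finite ground set Ω, a normalized, monotone, submodular set function f on Ω, and disjoint sets A, B ⊆ Ω that are Marginally Independent (f(B ∪ {a}) − f(B) = f({a}) for all a ∈ A and f(A ∪ {b}) − f(A) = f({b}) for all b ∈ B) but not Jointly Independent (f(A ∪ B) ≠ f(A) + f(B)). -/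
/-- MI does not imply JI: there is a normalized, monotone, submodular set
function `f` on a finite ground set and disjoint sets `A`, `B` that are
marginally independent but not jointly independent. -/
theorem MI_not_implies_JI :
    ∃ (Ω : Type) (_ : Fintype Ω) (_ : DecidableEq Ω) (f : Finset Ω → ℝ)
      (A B : Finset Ω),
      f ∅ = 0 ∧
      (∀ S T : Finset Ω, S ⊆ T → f S ≤ f T) ∧
      (∀ S T : Finset Ω, f S + f T ≥ f (S ∪ T) + f (S ∩ T)) ∧
      Disjoint A B ∧
      (∀ a ∈ A, f (B ∪ {a}) - f B = f {a}) ∧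
      (∀ b ∈ B, f (A ∪ {b}) - f A = f {b}) ∧
      f (A ∪ B) ≠ f A + f B := by
  refine ⟨Fin 4, inferInstance, inferInstance,
    fun S => (min S.card 3 : ℕ), {0, 1}, {2, 3}, ?_, ?_, ?_, ?_, ?_, ?_, ?_⟩
  · simp
  · intro S T hST
    have h := Finset.card_le_card hST
    have h2 : min S.card 3 ≤ min T.card 3 := by omega
    simp only
    exact_mod_cast h2
  · intro S T
    have h1 : (S ∪ T).card + (S ∩ T).card = S.card + T.card :=
      Finset.card_union_add_card_inter S T
    have h2 : S.card ≤ (S ∪ T).card := Finset.card_le_card Finset.subset_union_left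
    have h2' : T.card ≤ (S ∪ T).card := Finset.card_le_card Finset.subset_union_right
    have h3 : min ((S ∪ T).card) 3 + min ((S ∩ T).card) 3 ≤ min S.card 3 + min T.card 3 := by
      omega
    simp only
    exact_mod_cast h3
  · decide
  · intro a ha
    simp only
    fin_cases ha <;> (rw [sub_eq_iff_eq_add]; norm_cast)
  · intro b hb
    simp only
    fin_cases hb <;> (rw [sub_eq_iff_eq_add]; norm_cast)
  · simp only
    intro h
    rw [show ({0,1} ∪ {2,3} : Finset (Fin 4)) = {0,1,2,3} from by decide,
      show ({0,1,2,3} : Finset (Fin 4)).card = 4 from by decide,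
      show ({0,1} : Finset (Fin 4)).card = 2 from by decide,
      show ({2,3} : Finset (Fin 4)).card = 2 from by decide] at h
    norm_num at h
end

section
/- Let Ω be a finite set, U a finite universe, γ a map from Ω to subsets of U, and f the coverage function f(S) = |⋃_{s∈S} γ(s)|. For disjoint A, B ⊆ Ω, if f({a, b}) = f({a}) + f({b}) for all a ∈ A and b ∈ B (Pairwise Independence), then f(A ∪ B) = f(A) + f(B) (Joint Independence). Consequently, for coverage functions Joint, Marginal, Subset-Marginal and Pairwise Independence are all equivalent. -/
/-- For coverage functions `f S = |⋃_{s ∈ S} γ s|` and disjoint `A`, `B`,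
pairwise independence implies joint independence; consequently joint, marginal,
subset-marginal and pairwise independence are all equivalent. -/
theorem coverage_PI_implies_JI_and_equivalences
    (Ω : Type*) [Fintype Ω] [DecidableEq Ω]
    (U : Type*) [Fintype U] [DecidableEq U]
    (γ : Ω → Finset U)
    (f : Finset Ω → ℝ) (hf : ∀ S : Finset Ω, f S = ((S.biUnion γ).card : ℕ))
    (A B : Finset Ω) (hdisj : Disjoint A B) :
    ((∀ a ∈ A, ∀ b ∈ B, f {a, b} = f {a} + f {b}) →
      f (A ∪ B) = f A + f B) ∧
    (f (A ∪ B) = f A + f B ↔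
      ((∀ a ∈ A, f (B ∪ {a}) - f B = f {a}) ∧
       (∀ b ∈ B, f (A ∪ {b}) - f A = f {b}))) ∧
    (f (A ∪ B) = f A + f B ↔
      ((∀ a ∈ A, ∀ X ⊆ B, f (X ∪ {a}) - f X = f {a}) ∧
       (∀ b ∈ B, ∀ X ⊆ A, f (X ∪ {b}) - f X = f {b}))) ∧
    (f (A ∪ B) = f A + f B ↔
      (∀ a ∈ A, ∀ b ∈ B, f {a, b} = f {a} + f {b})) := by
  -- Key: cardinality of a union is additive iff the sets are disjoint.
  have key : ∀ s t : Finset U, ((s ∪ t).card : ℝ) = s.card + t.card ↔ Disjoint s t := by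
    intro s t
    rw [← Nat.cast_add, Nat.cast_inj]
    exact Finset.card_union_eq_card_add_card
  have hbu : ∀ S T : Finset Ω, (S ∪ T).biUnion γ = S.biUnion γ ∪ T.biUnion γ := by
    intro S T; ext u
    simp only [Finset.mem_biUnion, Finset.mem_union]
    aesop
  -- Central property: pairwise disjointness of images.
  set P : Prop := ∀ a ∈ A, ∀ b ∈ B, Disjoint (γ a) (γ b) with hP
  -- JI ↔ P
  have hJI : f (A ∪ B) = f A + f B ↔ P := by
    rw [hf, hf, hf, hbu, key,
      Finset.disjoint_biUnion_left]
    simp [Finset.disjoint_biUnion_right]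
    exact Iff.rfl
  -- PI ↔ P
  have hPI : (∀ a ∈ A, ∀ b ∈ B, f {a, b} = f {a} + f {b}) ↔ P := by
    apply forall₂_congr; intro a _
    apply forall₂_congr; intro b _
    rw [hf, hf, hf]
    have : ({a, b} : Finset Ω).biUnion γ = γ a ∪ γ b := by
      simp [Finset.biUnion_insert]
    rw [this, Finset.singleton_biUnion, Finset.singleton_biUnion]
    exact key _ _
  -- a single marginal condition
  have hmarg : ∀ (X : Finset Ω) (a : Ω),
      (f (X ∪ {a}) - f X = f {a}) ↔ Disjoint (X.biUnion γ) (γ a) := by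
    intro X a
    rw [sub_eq_iff_eq_add', hf, hf, hf, hbu,
      Finset.singleton_biUnion]
    exact key _ _
  -- MI ↔ P
  have hMI : ((∀ a ∈ A, f (B ∪ {a}) - f B = f {a}) ∧
      (∀ b ∈ B, f (A ∪ {b}) - f A = f {b})) ↔ P := by
    constructor
    · rintro ⟨h1, _⟩ a ha b hb
      have := (hmarg B a).mp (h1 a ha)
      rw [Finset.disjoint_biUnion_left] at this
      exact ((this b hb).symm)
    · intro hp
      constructor
      · intro a ha
        rw [hmarg, Finset.disjoint_biUnion_left]
        exact fun b hb => (hp a ha b hb).symm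
      · intro b hb
        rw [hmarg, Finset.disjoint_biUnion_left]
        exact fun a ha => hp a ha b hb
  -- SMI ↔ P
  have hSMI : ((∀ a ∈ A, ∀ X ⊆ B, f (X ∪ {a}) - f X = f {a}) ∧
      (∀ b ∈ B, ∀ X ⊆ A, f (X ∪ {b}) - f X = f {b})) ↔ P := by
    constructor
    · rintro ⟨h1, _⟩ a ha b hb
      have := (hmarg B a).mp (h1 a ha B le_rfl)
      rw [Finset.disjoint_biUnion_left] at this
      exact (this b hb).symm
    · intro hp
      constructor
      · intro a ha X hX
        rw [hmarg, Finset.disjoint_biUnion_left]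
        exact fun b hb => (hp a ha b (hX hb)).symm
      · intro b hb X hX
        rw [hmarg, Finset.disjoint_biUnion_left]
        exact fun a ha => hp a (hX ha) b hb
  refine ⟨fun h => hJI.mpr (hPI.mp h), hJI.trans hMI.symm, hJI.trans hSMI.symm,
    hJI.trans hPI.symm⟩
end

section
/- Let f be a normalized, monotone, submodular set function on a finite ground set Ω, and let A, B, C ⊆ Ω. If I_f(A; C | B) = 0, then I_f(A; C) ≤ I_f(A; B) and I_f(A; C) ≤ I_f(C; B) (a data-processing inequality for submodular mutual information). -/
/-- Data-processing inequality: for a normalized, monotone, submodular `f`,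
if `I_f(A; C | B) = 0` then `I_f(A; C) ≤ I_f(A; B)` and
`I_f(A; C) ≤ I_f(C; B)`, where `I_f(A; B) = f A + f B - f (A ∪ B)` and
`I_f(A; C | B) = f (A ∪ B) + f (C ∪ B) - f (A ∪ C ∪ B) - f B`. -/
theorem submodular_data_processing
    {Ω : Type*} [Fintype Ω] [DecidableEq Ω]
    (f : Finset Ω → ℝ)
    (hnorm : f ∅ = 0)
    (hmono : ∀ S T : Finset Ω, S ⊆ T → f S ≤ f T)
    (hsub : ∀ S T : Finset Ω, f S + f T ≥ f (S ∪ T) + f (S ∩ T))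
    (A B C : Finset Ω)
    (hci : f (A ∪ B) + f (C ∪ B) - f (A ∪ C ∪ B) - f B = 0) :
    f A + f C - f (A ∪ C) ≤ f A + f B - f (A ∪ B) ∧
    f A + f C - f (A ∪ C) ≤ f C + f B - f (C ∪ B) := by
  have e1 : (A ∪ C) ∪ (C ∪ B) = A ∪ C ∪ B := by
    ext x; simp only [Finset.mem_union]; tauto
  have e2 : (A ∪ C) ∪ (A ∪ B) = A ∪ C ∪ B := by
    ext x; simp only [Finset.mem_union]; tauto
  have h1 := hsub (A ∪ C) (C ∪ B)
  have h2 := hsub (A ∪ C) (A ∪ B)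
  rw [e1] at h1
  rw [e2] at h2
  have m1 : f C ≤ f ((A ∪ C) ∩ (C ∪ B)) := by
    apply hmono
    intro x hx
    simp only [Finset.mem_union, Finset.mem_inter] at *
    tauto
  have m2 : f A ≤ f ((A ∪ C) ∩ (A ∪ B)) := by
    apply hmono
    intro x hx
    simp only [Finset.mem_union, Finset.mem_inter] at *
    tauto
  constructor <;> linarith
end
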